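/- If A is a symmetric positive definite d×d matrix satisfying ‖A‖ / (det A)^{1/d} ≤ min(1 + 1/d, (1 − 1/d)^{-1/(d-1)}), then ‖A/(det A)^{1/d} − I‖ ≤ 1/d. -/

import Mathlib

/-!
Normalise to `B = A / (det A)^(1/d)`, so that `det B = 1`. The eigenvalues `λᵢ` of `B` are
positive, have product `1`, and are bounded by `‖B‖`, hence by `1 + 1/d` and by
`m = (1 - 1/d)^(-1/(d-1))`. The first bound gives `λᵢ - 1 ≤ 1/d`. For the second, each `λⱼ` is the
reciprocal of the product of the other `d - 1` eigenvalues, so `λⱼ ≥ m^(-(d-1)) = 1 - 1/d`.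
As `B` is self-adjoint, `‖B - 1‖ = maxᵢ |λᵢ - 1|`.
-/

noncomputable def specNorm {d : ℕ} (A : Matrix (Fin d) (Fin d) ℝ) : ℝ :=
  ‖LinearMap.toContinuousLinearMap (Matrix.toEuclideanLin A)‖

open scoped Matrix.Norms.L2Operator

section IsometricCFC

variable {A : Type*} [NormedRing A] [StarRing A] [NormedAlgebra ℝ A]
  [IsometricContinuousFunctionalCalculus ℝ A IsSelfAdjoint] {a : A}

lemma IsSelfAdjoint.abs_le_norm_of_mem_spectrum (ha : IsSelfAdjoint a) {x : ℝ}
    (hx : x ∈ spectrum ℝ a) : |x| ≤ ‖a‖ := by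
  simpa [cfc_id' ℝ a] using norm_apply_le_norm_cfc (fun x : ℝ ↦ x) a hx

lemma IsSelfAdjoint.norm_sub_one_le_iff (ha : IsSelfAdjoint a) {ε : ℝ} (hε : 0 ≤ ε) :
    ‖a - 1‖ ≤ ε ↔ ∀ x ∈ spectrum ℝ a, |x - 1| ≤ ε := by
  simp_rw [← Real.norm_eq_abs]
  rw [← norm_cfc_le_iff (fun x : ℝ ↦ x - 1) a hε, cfc_sub .., cfc_id' ℝ a, cfc_const_one ℝ a]

end IsometricCFC

lemma specNorm_eq_l2_opNorm {d : ℕ} (A : Matrix (Fin d) (Fin d) ℝ) : specNorm A = ‖A‖ := rfl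

lemma Real.rpow_neg_one_div_natCast_pow {x : ℝ} (hx : 0 ≤ x) {n : ℕ} (hn : n ≠ 0) :
    (x ^ (-(1 / (n : ℝ)))) ^ n = x⁻¹ := by
  rw [Real.rpow_neg hx, one_div, ← Real.inv_rpow hx,
    Real.rpow_inv_natCast_pow (inv_nonneg.2 hx) hn]

lemma inv_pow_card_sub_one_le_of_prod_eq_one {ι : Type*} [Fintype ι] {f : ι → ℝ}
    (hpos : ∀ i, 0 < f i) (hprod : ∏ i, f i = 1) {M : ℝ} (hM : ∀ i, f i ≤ M) (j : ι) :
    (M ^ (Fintype.card ι - 1))⁻¹ ≤ f j := by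
  classical
  have hrest : ∏ i ∈ Finset.univ.erase j, f i ≤ M ^ (Fintype.card ι - 1) := by
    rw [← Finset.card_univ, ← Finset.card_erase_of_mem (Finset.mem_univ j)]
    exact (Finset.prod_le_prod (fun i _ ↦ (hpos i).le) fun i _ ↦ hM i).trans_eq
      (Finset.prod_const M)
  have hrest_pos : 0 < ∏ i ∈ Finset.univ.erase j, f i := Finset.prod_pos fun i _ ↦ hpos i
  have hj : f j = (∏ i ∈ Finset.univ.erase j, f i)⁻¹ := by
    refine eq_inv_of_mul_eq_one_left ?_
    rw [Finset.mul_prod_erase _ _ (Finset.mem_univ j), hprod]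
  rw [hj]
  exact inv_anti₀ hrest_pos hrest

lemma one_sub_inv_le_of_prod_eq_one {d : ℕ} (hd : 2 ≤ d) {f : Fin d → ℝ} (hpos : ∀ i, 0 < f i)
    (hprod : ∏ i, f i = 1) (hle : ∀ i, f i ≤ (1 - 1 / (d : ℝ)) ^ (-(1 / ((d : ℝ) - 1))))
    (j : Fin d) : 1 - 1 / (d : ℝ) ≤ f j := by
  have h_one_sub : 0 ≤ 1 - 1 / (d : ℝ) := by
    rw [sub_nonneg, div_le_one (by positivity)]
    exact_mod_cast (by omega : 1 ≤ d)
  have := inv_pow_card_sub_one_le_of_prod_eq_one hpos hprod hle j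
  rwa [Fintype.card_fin, ← Nat.cast_pred (by omega),
    Real.rpow_neg_one_div_natCast_pow h_one_sub (by omega), inv_inv] at this

theorem stmt_6 (d : ℕ) (hd : 2 ≤ d) (A : Matrix (Fin d) (Fin d) ℝ)
    (hA : A.PosDef)
    (h : specNorm A / A.det ^ ((1 : ℝ) / d) ≤
      min (1 + 1 / (d : ℝ)) ((1 - 1 / (d : ℝ)) ^ (-(1 / ((d : ℝ) - 1))))) :
    specNorm ((A.det ^ ((1 : ℝ) / d))⁻¹ • A - 1) ≤ 1 / (d : ℝ) := by
  have hcd : (A.det ^ ((1 : ℝ) / d)) ^ d = A.det := by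
    rw [one_div, Real.rpow_inv_natCast_pow hA.det_pos.le (by omega)]
  set c := A.det ^ ((1 : ℝ) / d)
  have hc : 0 < c := Real.rpow_pos_of_pos hA.det_pos _
  set B := c⁻¹ • A
  have hB : B.PosDef := hA.smul (inv_pos.2 hc)
  have hdetB : B.det = 1 := by
    rw [Matrix.det_smul, Fintype.card_fin, inv_pow, hcd, inv_mul_cancel₀ hA.det_pos.ne']
  have hnormB : ‖B‖ = specNorm A / c := by
    rw [norm_smul, Real.norm_eq_abs, abs_of_pos (inv_pos.2 hc), inv_mul_eq_div]; rfl
  set μ := hB.isHermitian.eigenvalues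
  have hμ : ∀ i, μ i ≤ min (1 + 1 / (d : ℝ)) ((1 - 1 / (d : ℝ)) ^ (-(1 / ((d : ℝ) - 1)))) :=
    fun i ↦ (le_abs_self _).trans <| (hB.isHermitian.isSelfAdjoint.abs_le_norm_of_mem_spectrum
      (hB.isHermitian.eigenvalues_mem_spectrum_real i)).trans (hnormB ▸ h)
  have hprod : ∏ i, μ i = 1 := by
    simpa [hdetB] using hB.isHermitian.det_eq_prod_eigenvalues.symm
  rw [specNorm_eq_l2_opNorm, hB.isHermitian.isSelfAdjoint.norm_sub_one_le_iff (by positivity),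
    hB.isHermitian.spectrum_real_eq_range_eigenvalues]
  rintro _ ⟨i, rfl⟩
  rw [abs_sub_le_iff]
  constructor
  · linarith [(hμ i).trans (min_le_left _ _)]
  · linarith [one_sub_inv_le_of_prod_eq_one hd hB.eigenvalues_pos hprod
      (fun i ↦ (hμ i).trans (min_le_right _ _)) i]
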